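/- arXiv:2411.09721 — 2 statements merged into one kernel-verified Lean document; each statement's English description precedes it below -/
import Mathlib

section
/- Let 0 < x̄₁ < x̄₂ satisfy x̄₁ = g(x̄₂)f(x̄₁) and x̄₂ = g(x̄₁)f(x̄₂) (a non-homogeneous stationary state of the two-cell reduced system), and write f₁ = f(x̄₁), f₂ = f(x̄₂), f′₁ = f′(x̄₁), f′₂ = f′(x̄₂), g₁ = g(x̄₁), g₂ = g(x̄₂), g′₁ = g′(x̄₁), g′₂ = g′(x̄₂). Then every complex eigenvalue of the Jacobian J = [[f′₁g₂ − 1, f₁g′₂], [f₂g′₁, f′₂g₁ − 1]] has negative real part if and only if 0 < f′₁f′₂g₁g₂ − f₁f₂g′₁g′₂ − f′₁g₂ − f′₂g₁ + 1, equivalently (1 − f′₂g₁)(1 − f′₁g₂) > f₁f₂g′₁g′₂. -/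
/-- The Hill-type function `f(x) = 1/(a + x^k)` of the reduced Hes1–Notch model. -/
noncomputable def fHill (a : ℝ) (k : ℕ) : ℝ → ℝ := fun x => 1 / (a + x ^ k)

/-- The Hill-type function `g(x) = 1/(1 + b·x^h)` of the reduced Hes1–Notch model. -/
noncomputable def gHill (b : ℝ) (h : ℕ) : ℝ → ℝ := fun x => 1 / (1 + b * x ^ h)

/-! The Jacobian has negative trace, since `f` is nonincreasing and `g` is nonnegative on `[0, ∞)`.
For a real `2 × 2` matrix with negative trace both eigenvalues lie in the open left half-plane
exactly when the determinant is positive: a root `z` of `z² - T z + Δ` with `re z ≥ 0` is forced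
to be real because `2 re z - T > 0`, and for `Δ ≤ 0` the larger real root is nonnegative. -/

open Polynomial

theorem hasDerivAt_fHill {a x : ℝ} (k : ℕ) (hx : a + x ^ k ≠ 0) :
    HasDerivAt (fHill a k) (-(k * x ^ (k - 1)) / (a + x ^ k) ^ 2) x := by
  unfold fHill
  simpa [one_div, Pi.inv_def] using ((hasDerivAt_pow k x).const_add a).inv hx

theorem deriv_fHill_nonpos {a x : ℝ} (k : ℕ) (ha : 0 < a) (hx : 0 ≤ x) :
    deriv (fHill a k) x ≤ 0 := by
  rw [(hasDerivAt_fHill k (by positivity)).deriv]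
  exact div_nonpos_of_nonpos_of_nonneg (neg_nonpos.mpr (by positivity)) (by positivity)

theorem gHill_nonneg {b x : ℝ} (h : ℕ) (hb : 0 ≤ b) (hx : 0 ≤ x) : 0 ≤ gHill b h x := by
  unfold gHill; positivity

theorem exists_nonneg_quadratic_root_of_nonpos {T Δ : ℝ} (hΔ : Δ ≤ 0) :
    ∃ t : ℝ, 0 ≤ t ∧ t ^ 2 - T * t + Δ = 0 := by
  set s := √(T ^ 2 - 4 * Δ)
  have hs : s ^ 2 = T ^ 2 - 4 * Δ := Real.sq_sqrt (by nlinarith)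
  have hTs : -T ≤ s := (neg_le_abs T).trans <| by
    rw [← Real.sqrt_sq_eq_abs]; exact Real.sqrt_le_sqrt (by linarith)
  exact ⟨(T + s) / 2, by linarith, by nlinarith⟩

theorem re_neg_of_quadratic_root {T Δ : ℝ} {z : ℂ} (hT : T < 0) (hΔ : 0 < Δ)
    (hz : z ^ 2 - T * z + Δ = 0) : z.re < 0 := by
  by_contra! hre
  have hre_eq : z.re ^ 2 - z.im ^ 2 - T * z.re + Δ = 0 := by
    simpa [sq] using congrArg Complex.re hz
  have him_eq : z.im * (2 * z.re - T) = 0 := by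
    have := congrArg Complex.im hz
    simp only [sq, Complex.add_im, Complex.sub_im, Complex.mul_im, Complex.ofReal_re,
      Complex.ofReal_im, zero_mul, add_zero, Complex.zero_im] at this
    linarith
  have him : z.im = 0 := (mul_eq_zero.mp him_eq).resolve_right (by linarith)
  rw [him] at hre_eq
  nlinarith

theorem forall_quadratic_root_re_neg_iff {T Δ : ℝ} (hT : T < 0) :
    (∀ z : ℂ, z ^ 2 - T * z + Δ = 0 → z.re < 0) ↔ 0 < Δ := by
  refine ⟨fun H => ?_, fun hΔ z => re_neg_of_quadratic_root hT hΔ⟩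
  by_contra! hΔ
  obtain ⟨t, ht, hroot⟩ := exists_nonneg_quadratic_root_of_nonpos (T := T) hΔ
  have := H t (by exact_mod_cast hroot)
  rw [Complex.ofReal_re] at this
  linarith

theorem Matrix.forall_charpoly_root_re_neg_iff (A : Matrix (Fin 2) (Fin 2) ℝ)
    (hA : A.trace < 0) :
    (∀ z : ℂ, (A.map Complex.ofReal).charpoly.IsRoot z → z.re < 0) ↔ 0 < A.det := by
  have htr : (A.map Complex.ofReal).trace = A.trace := by simp [Matrix.trace_fin_two]
  have hdet : (A.map Complex.ofReal).det = A.det := by simp [Matrix.det_fin_two]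
  simp only [Matrix.charpoly_fin_two, htr, hdet, IsRoot.def, eval_add, eval_sub, eval_mul,
    eval_pow, eval_C, eval_X]
  exact forall_quadratic_root_re_neg_iff hA

theorem nonhomogeneous_state_stable_iff_general
    (a b : ℝ) (ha : 0 < a) (hb : 0 < b) (k h : ℕ)
    (x1 x2 : ℝ) (hx1 : 0 < x1) (hx12 : x1 < x2) :
    ((∀ z : ℂ,
        (Matrix.charpoly
          ((!![deriv (fHill a k) x1 * gHill b h x2 - 1, fHill a k x1 * deriv (gHill b h) x2;
               fHill a k x2 * deriv (gHill b h) x1, deriv (fHill a k) x2 * gHill b h x1 - 1]).map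
            Complex.ofReal)).IsRoot z → z.re < 0) ↔
      0 < deriv (fHill a k) x1 * deriv (fHill a k) x2 * gHill b h x1 * gHill b h x2
          - fHill a k x1 * fHill a k x2 * deriv (gHill b h) x1 * deriv (gHill b h) x2
          - deriv (fHill a k) x1 * gHill b h x2 - deriv (fHill a k) x2 * gHill b h x1 + 1) ∧
    ((0 < deriv (fHill a k) x1 * deriv (fHill a k) x2 * gHill b h x1 * gHill b h x2
          - fHill a k x1 * fHill a k x2 * deriv (gHill b h) x1 * deriv (gHill b h) x2
          - deriv (fHill a k) x1 * gHill b h x2 - deriv (fHill a k) x2 * gHill b h x1 + 1) ↔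
      fHill a k x1 * fHill a k x2 * deriv (gHill b h) x1 * deriv (gHill b h) x2 <
        (1 - deriv (fHill a k) x2 * gHill b h x1) * (1 - deriv (fHill a k) x1 * gHill b h x2)) := by
  have hx2 : 0 ≤ x2 := by linarith
  have hdf1 := deriv_fHill_nonpos k ha hx1.le
  have hdf2 := deriv_fHill_nonpos k ha hx2
  have hg1 := gHill_nonneg h hb.le hx1.le
  have hg2 := gHill_nonneg h hb.le hx2
  have htrace : (!![deriv (fHill a k) x1 * gHill b h x2 - 1, fHill a k x1 * deriv (gHill b h) x2;
      fHill a k x2 * deriv (gHill b h) x1, deriv (fHill a k) x2 * gHill b h x1 - 1]).trace < 0 := by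
    rw [Matrix.trace_fin_two_of]
    linarith [mul_nonpos_of_nonpos_of_nonneg hdf1 hg2, mul_nonpos_of_nonpos_of_nonneg hdf2 hg1]
  rw [Matrix.forall_charpoly_root_re_neg_iff _ htrace, Matrix.det_fin_two_of]
  constructor <;> constructor <;> intro <;> linarith

/-- At a non-homogeneous stationary state `0 < x̄₁ < x̄₂` of the two-cell reduced system,
every complex eigenvalue of the Jacobian `J = [[f′₁g₂ − 1, f₁g′₂], [f₂g′₁, f′₂g₁ − 1]]`
has negative real part if and only if
`0 < f′₁f′₂g₁g₂ − f₁f₂g′₁g′₂ − f′₁g₂ − f′₂g₁ + 1`, equivalently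
`(1 − f′₂g₁)(1 − f′₁g₂) > f₁f₂g′₁g′₂`. -/
theorem nonhomogeneous_state_stable_iff
    (a b : ℝ) (ha : 0 < a) (hb : 0 < b) (k h : ℕ) (hk : 1 ≤ k) (hh : 1 ≤ h)
    (x1 x2 : ℝ) (hx1 : 0 < x1) (hx12 : x1 < x2)
    (hrel1 : x1 = gHill b h x2 * fHill a k x1)
    (hrel2 : x2 = gHill b h x1 * fHill a k x2) :
    ((∀ z : ℂ,
        (Matrix.charpoly
          ((!![deriv (fHill a k) x1 * gHill b h x2 - 1, fHill a k x1 * deriv (gHill b h) x2;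
               fHill a k x2 * deriv (gHill b h) x1, deriv (fHill a k) x2 * gHill b h x1 - 1]).map
            Complex.ofReal)).IsRoot z → z.re < 0) ↔
      0 < deriv (fHill a k) x1 * deriv (fHill a k) x2 * gHill b h x1 * gHill b h x2
          - fHill a k x1 * fHill a k x2 * deriv (gHill b h) x1 * deriv (gHill b h) x2
          - deriv (fHill a k) x1 * gHill b h x2 - deriv (fHill a k) x2 * gHill b h x1 + 1) ∧
    ((0 < deriv (fHill a k) x1 * deriv (fHill a k) x2 * gHill b h x1 * gHill b h x2
          - fHill a k x1 * fHill a k x2 * deriv (gHill b h) x1 * deriv (gHill b h) x2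
          - deriv (fHill a k) x1 * gHill b h x2 - deriv (fHill a k) x2 * gHill b h x1 + 1) ↔
      fHill a k x1 * fHill a k x2 * deriv (gHill b h) x1 * deriv (gHill b h) x2 <
        (1 - deriv (fHill a k) x2 * gHill b h x1) * (1 - deriv (fHill a k) x1 * gHill b h x2)) :=
  nonhomogeneous_state_stable_iff_general a b ha hb k h x1 x2 hx1 hx12
end

section
/- Let x̄₀ ∈ (0,1) satisfy φ(x̄₀) = x̄₀, let N ≥ 2, and let J be the N×N complex circulant matrix with every diagonal entry g(x̄₀)f′(x̄₀) − 1, entries g′(x̄₀)f(x̄₀)/2 at positions (j, j±1 mod N), and zeros elsewhere. Then for each s ∈ {0,…,N−1} the vector v_s with components v_s(j) = exp(2πi·s·j/N) satisfies J·v_s = λ_s·v_s with λ_s = g′(x̄₀)f(x̄₀)·cos(2πs/N) + g(x̄₀)f′(x̄₀) − 1. Moreover, if N is even, J has a positive real eigenvalue if and only if f(x̄₀)g′(x̄₀) − f′(x̄₀)g(x̄₀) < −1. -/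
/-- The `N×N` circulant Jacobian of the reduced Hes1–Notch model on a one-dimensional
periodic lattice: diagonal entries `d`, entries `o` at the neighbour positions
`(j, j±1 mod N)`, zeros elsewhere. -/
noncomputable def circJ (N : ℕ) (d o : ℂ) : Matrix (ZMod N) (ZMod N) ℂ :=
  Matrix.of fun i j =>
    (if j = i then d else 0) + (if j = i + 1 then o else 0) + (if j = i - 1 then o else 0)

/-!
The Fourier vectors are the additive characters `ψ` of `ZMod N`, and a character is an
eigenvector of the circulant `J` with eigenvalue `d + o (ψ 1 + ψ (-1))`, where
`ψ 1 + ψ (-1) = 2 cos (2πs/N)`. Since `f > 0` and `g' < 0`, the neighbour coupling `o` is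
negative, so by Gershgorin every eigenvalue lies within `-2o` of the diagonal entry `d` and a real
eigenvalue is at most `d - 2o`; for even `N` this bound is attained by the alternating mode
`s = N/2`.
-/

open Complex Matrix

lemma isRoot_charpoly_of_mulVec_eq_smul {n K : Type*} [Fintype n] [DecidableEq n] [Field K]
    (A : Matrix n n K) {v : n → K} (hv : v ≠ 0) {μ : K} (h : A *ᵥ v = μ • v) :
    A.charpoly.IsRoot μ := by
  rw [← Matrix.charpoly_toLin', ← Module.End.hasEigenvalue_iff_isRoot_charpoly]
  exact Module.End.hasEigenvalue_of_hasEigenvector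
    ⟨Module.End.mem_eigenspace_iff.mpr (by rwa [toLin'_apply]), hv⟩

lemma circJ_apply_self {N : ℕ} (hN : 2 ≤ N) (d o : ℂ) (k : ZMod N) : circJ N d o k k = d := by
  have : Fact (1 < N) := ⟨hN⟩
  simp [circJ, eq_sub_iff_add_eq]

section ZModN

variable {N : ℕ} [NeZero N]

lemma exp_eq_stdAddChar_pow (s : ℕ) (j : ZMod N) :
    exp (2 * Real.pi * I * s * j.val / N) = (ZMod.stdAddChar ^ s) j := by
  rw [AddChar.pow_apply, ZMod.stdAddChar_apply, ZMod.toCircle_apply, ← exp_nat_mul]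
  ring_nf

lemma stdAddChar_pow_one_add_neg_one (s : ℕ) :
    (ZMod.stdAddChar ^ s) (1 : ZMod N) + (ZMod.stdAddChar ^ s) (-1 : ZMod N) =
      2 * Real.cos (2 * Real.pi * s / N) := by
  have h1 := ZMod.stdAddChar_coe (N := N) 1
  have h2 := ZMod.stdAddChar_coe (N := N) (-1)
  push_cast at h1 h2
  rw [AddChar.pow_apply, AddChar.pow_apply, h1, h2, ← exp_nat_mul, ← exp_nat_mul,
    ofReal_cos, cos]
  push_cast
  ring_nf

lemma circJ_mulVec_apply (d o : ℂ) (w : ZMod N → ℂ) (i : ZMod N) :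
    (circJ N d o *ᵥ w) i = d * w i + o * (w (i + 1) + w (i - 1)) := by
  simp only [mulVec, dotProduct, circJ, of_apply, add_mul, ite_mul, zero_mul,
    Finset.sum_add_distrib, Finset.sum_ite_eq', Finset.mem_univ, if_true]
  ring

lemma circJ_mulVec_addChar (d o : ℂ) (ψ : AddChar (ZMod N) ℂ) :
    circJ N d o *ᵥ ψ = (d + o * (ψ 1 + ψ (-1))) • ⇑ψ := by
  ext i
  rw [circJ_mulVec_apply, Pi.smul_apply, smul_eq_mul, AddChar.map_add_eq_mul,
    sub_eq_add_neg, AddChar.map_add_eq_mul]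
  ring

lemma sum_norm_circJ_offDiag_le (d o : ℂ) (k : ZMod N) :
    ∑ j ∈ Finset.univ.erase k, ‖circJ N d o k j‖ ≤ 2 * ‖o‖ := by
  calc ∑ j ∈ Finset.univ.erase k, ‖circJ N d o k j‖
      ≤ ∑ j ∈ Finset.univ.erase k,
          (‖if j = k + 1 then o else 0‖ + ‖if j = k - 1 then o else 0‖) := by
        refine Finset.sum_le_sum fun j hj => ?_
        simp only [circJ, of_apply, if_neg (Finset.ne_of_mem_erase hj), zero_add]
        exact norm_add_le _ _
    _ ≤ ∑ j, (‖if j = k + 1 then o else 0‖ + ‖if j = k - 1 then o else 0‖) :=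
        Finset.sum_le_sum_of_subset_of_nonneg (Finset.erase_subset _ _)
          fun _ _ _ => by positivity
    _ = 2 * ‖o‖ := by
        simp only [apply_ite norm, norm_zero, Finset.sum_add_distrib, Finset.sum_ite_eq',
          Finset.mem_univ, if_true]
        ring

lemma norm_sub_le_of_isRoot_charpoly_circJ (hN : 2 ≤ N) (d o : ℂ) {μ : ℂ}
    (hμ : (circJ N d o).charpoly.IsRoot μ) : ‖μ - d‖ ≤ 2 * ‖o‖ := by
  rw [← Matrix.charpoly_toLin', ← Module.End.hasEigenvalue_iff_isRoot_charpoly] at hμ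
  obtain ⟨k, hk⟩ := eigenvalue_mem_ball hμ
  rw [Metric.mem_closedBall, circJ_apply_self hN, dist_eq_norm] at hk
  exact hk.trans (sum_norm_circJ_offDiag_le d o k)

lemma le_sub_of_isRoot_charpoly_circJ (hN : 2 ≤ N) {d o : ℝ} (ho : o ≤ 0) {t : ℝ}
    (ht : (circJ N d o).charpoly.IsRoot t) : t ≤ d - 2 * o := by
  have hbound := norm_sub_le_of_isRoot_charpoly_circJ hN _ _ ht
  rw [← ofReal_sub, norm_real, norm_real, Real.norm_eq_abs, Real.norm_eq_abs,
    abs_of_nonpos ho] at hbound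
  linarith [le_abs_self (t - d)]

lemma cos_two_pi_mul_half_div_eq_neg_one (hN : Even N) :
    Real.cos (2 * Real.pi * (N / 2 : ℕ) / N) = -1 := by
  have := NeZero.ne N
  rw [Nat.cast_div_charZero hN.two_dvd, Nat.cast_ofNat, ← Real.cos_pi]
  congr 1
  field_simp

end ZModN

lemma fHill_pos {a : ℝ} (ha : 0 < a) (k : ℕ) {x : ℝ} (hx : 0 ≤ x) : 0 < fHill a k x := by
  unfold fHill
  positivity

lemma hasDerivAt_gHill (b : ℝ) (h : ℕ) {x : ℝ} (hx : 1 + b * x ^ h ≠ 0) :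
    HasDerivAt (gHill b h) (-(b * (h * x ^ (h - 1))) / (1 + b * x ^ h) ^ 2) x := by
  have hden : HasDerivAt (fun y : ℝ => 1 + b * y ^ h) (b * (h * x ^ (h - 1))) x := by
    simpa using ((hasDerivAt_pow h x).const_mul b).const_add 1
  have hg := (hasDerivAt_const x (1 : ℝ)).fun_div hden hx
  rwa [zero_mul, one_mul, zero_sub] at hg

lemma deriv_gHill_neg {b : ℝ} (hb : 0 < b) {h : ℕ} (hh : 1 ≤ h) {x : ℝ} (hx : 0 < x) :
    deriv (gHill b h) x < 0 := by
  rw [(hasDerivAt_gHill b h (by positivity)).deriv, neg_div, neg_lt_zero]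
  have : (0 : ℝ) < h := by exact_mod_cast hh
  positivity

theorem circulant_jacobian_spectrum_general
    (a b : ℝ) (ha : 0 < a) (hb : 0 < b) (k h : ℕ) (hh : 1 ≤ h)
    (x0 : ℝ) (hx0 : x0 ∈ Set.Ioo (0 : ℝ) 1)
    (N : ℕ) [NeZero N] :
    (∀ s : ℕ, s < N →
      (circJ N ((gHill b h x0 * deriv (fHill a k) x0 - 1 : ℝ) : ℂ)
          ((deriv (gHill b h) x0 * fHill a k x0 / 2 : ℝ) : ℂ)).mulVec
        (fun j : ZMod N => Complex.exp (2 * Real.pi * Complex.I * s * j.val / N)) =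
      ((deriv (gHill b h) x0 * fHill a k x0 * Real.cos (2 * Real.pi * s / N)
          + gHill b h x0 * deriv (fHill a k) x0 - 1 : ℝ) : ℂ) •
        fun j : ZMod N => Complex.exp (2 * Real.pi * Complex.I * s * j.val / N)) ∧
    (Even N →
      ((∃ t : ℝ, 0 < t ∧
          (Matrix.charpoly (circJ N ((gHill b h x0 * deriv (fHill a k) x0 - 1 : ℝ) : ℂ)
            ((deriv (gHill b h) x0 * fHill a k x0 / 2 : ℝ) : ℂ))).IsRoot (t : ℂ)) ↔
        fHill a k x0 * deriv (gHill b h) x0 - deriv (fHill a k) x0 * gHill b h x0 < -1)) := by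
  set F := fHill a k x0
  set G := gHill b h x0
  set F' := deriv (fHill a k) x0
  set G' := deriv (gHill b h) x0
  have hF : 0 < F := fHill_pos ha k hx0.1.le
  have hG' : G' < 0 := deriv_gHill_neg hb hh hx0.1
  have eigen (s : ℕ) :
      circJ N ((G * F' - 1 : ℝ) : ℂ) ((G' * F / 2 : ℝ) : ℂ) *ᵥ ⇑(ZMod.stdAddChar ^ s) =
        ((G' * F * Real.cos (2 * Real.pi * s / N) + G * F' - 1 : ℝ) : ℂ) •
          ⇑(ZMod.stdAddChar ^ s) := by
    rw [circJ_mulVec_addChar, stdAddChar_pow_one_add_neg_one]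
    push_cast
    ring_nf
  simp only [exp_eq_stdAddChar_pow]
  refine ⟨fun s _ => eigen s, fun hN => ⟨?_, fun hlt => ?_⟩⟩
  · rintro ⟨t, ht, hroot⟩
    have hN2 : 2 ≤ N := by
      obtain ⟨m, rfl⟩ := hN
      have := NeZero.ne (m + m)
      omega
    have hle := le_sub_of_isRoot_charpoly_circJ hN2 (by nlinarith) hroot
    linarith [mul_comm F G', mul_comm F' G]
  · refine ⟨_, ?_, isRoot_charpoly_of_mulVec_eq_smul _ ?_ (eigen (N / 2))⟩
    · rw [cos_two_pi_mul_half_div_eq_neg_one hN]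
      linarith [mul_comm F G', mul_comm F' G]
    · exact fun h0 => by simpa using congrFun h0 0

/-- On a one-dimensional periodic lattice of `N` cells, the Fourier vectors
`v_s(j) = exp(2πi·s·j/N)` are eigenvectors of the linearisation `J` around the homogeneous
state `x̄₀`, with eigenvalues `λ_s = g′(x̄₀)f(x̄₀)·cos(2πs/N) + g(x̄₀)f′(x̄₀) − 1`; moreover,
for even `N`, `J` has a positive real eigenvalue iff
`f(x̄₀)g′(x̄₀) − f′(x̄₀)g(x̄₀) < −1`. -/
theorem circulant_jacobian_spectrum
    (a b : ℝ) (ha : 0 < a) (hb : 0 < b) (k h : ℕ) (hk : 1 ≤ k) (hh : 1 ≤ h)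
    (x0 : ℝ) (hx0 : x0 ∈ Set.Ioo (0 : ℝ) 1)
    (hfix : fHill a k x0 * gHill b h x0 = x0)
    (N : ℕ) [NeZero N] (hN : 2 ≤ N) :
    (∀ s : ℕ, s < N →
      (circJ N ((gHill b h x0 * deriv (fHill a k) x0 - 1 : ℝ) : ℂ)
          ((deriv (gHill b h) x0 * fHill a k x0 / 2 : ℝ) : ℂ)).mulVec
        (fun j : ZMod N => Complex.exp (2 * Real.pi * Complex.I * s * j.val / N)) =
      ((deriv (gHill b h) x0 * fHill a k x0 * Real.cos (2 * Real.pi * s / N)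
          + gHill b h x0 * deriv (fHill a k) x0 - 1 : ℝ) : ℂ) •
        fun j : ZMod N => Complex.exp (2 * Real.pi * Complex.I * s * j.val / N)) ∧
    (Even N →
      ((∃ t : ℝ, 0 < t ∧
          (Matrix.charpoly (circJ N ((gHill b h x0 * deriv (fHill a k) x0 - 1 : ℝ) : ℂ)
            ((deriv (gHill b h) x0 * fHill a k x0 / 2 : ℝ) : ℂ))).IsRoot (t : ℂ)) ↔
        fHill a k x0 * deriv (gHill b h) x0 - deriv (fHill a k) x0 * gHill b h x0 < -1)) :=
  circulant_jacobian_spectrum_general a b ha hb k h hh x0 hx0 N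
end
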